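/- Let A, B be real symmetric positive definite n×n matrices. Then ρ²(A,B) := Tr(A) + Tr(B) − 2Tr(√(√A·B·√A)) equals the minimum of Tr(A) + Tr(B) − 2Tr(√A·U) over real matrices U subject to the block matrix [[B, Uᵀ],[U, I]] being positive semidefinite. -/

import Mathlib

open Matrix BigOperators

open Classical in
noncomputable def msqrt {n : ℕ} (M : Matrix (Fin n) (Fin n) ℝ) : Matrix (Fin n) (Fin n) ℝ :=
  if h : M.PosSemidef then h.1.eigenvectorUnitary.1 * diagonal ((↑) ∘ (√·) ∘ h.1.eigenvalues) *
    (star h.1.eigenvectorUnitary : Matrix (Fin n) (Fin n) ℝ) else 0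

noncomputable def fnorm {n : ℕ} (A : Matrix (Fin n) (Fin n) ℝ) : ℝ :=
  Real.sqrt (∑ i, ∑ j, (A i j) ^ 2)

/-!
Write `S = √A` and `T = √(S B S)`. By a Schur complement the block constraint says `Uᵀ U ≤ B`
in the Loewner order. For such `U` the matrix `Y = U S T⁻¹` is a contraction,
`Yᵀ Y ≤ T⁻¹ S B S T⁻¹ = 1`, and `tr (S U) = tr (Y T) ≤ tr T` because
`0 ≤ tr ((Y - 1) T (Y - 1)ᵀ) ≤ 2 tr T - 2 tr (Y T)`. The bound is attained at `U = T⁻¹ S B`,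
for which `Uᵀ U = B`.
-/

open scoped MatrixOrder

namespace Matrix

variable {m n : Type*} [Fintype m] [Fintype n] [DecidableEq n]

lemma PosSemidef.trace_mul_nonneg {P Q : Matrix n n ℝ} (hP : P.PosSemidef) (hQ : Q.PosSemidef) :
    0 ≤ (P * Q).trace := by
  have hR : (CFC.sqrt P).IsHermitian := (CFC.sqrt_nonneg P).posSemidef.isHermitian
  calc 0 ≤ ((CFC.sqrt P)ᴴ * Q * CFC.sqrt P).trace := (hQ.conjTranspose_mul_mul_same _).trace_nonneg
    _ = (P * Q).trace := by
      rw [hR.eq, Matrix.mul_assoc, trace_mul_comm, Matrix.mul_assoc,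
        CFC.sqrt_mul_sqrt_self P hP.nonneg, trace_mul_comm]

lemma fromBlocks_one_posSemidef_iff [DecidableEq m] (B : Matrix m m ℝ) (U : Matrix n m ℝ) :
    (fromBlocks B Uᵀ U 1).PosSemidef ↔ Uᵀ * U ≤ B := by
  let _ : Invertible (1 : Matrix n n ℝ) := invertibleOne
  have := PosDef.fromBlocks₂₂ B Uᵀ (PosDef.one (n := n) (R := ℝ))
  simpa [conjTranspose_eq_transpose_of_trivial, le_iff] using this

lemma trace_mul_le_trace_of_transpose_mul_self_le_one {Y T : Matrix n n ℝ} (hT : T.PosSemidef)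
    (hY : Yᵀ * Y ≤ 1) : (Y * T).trace ≤ T.trace := by
  have hTs : Tᵀ = T := (isHermitian_iff_isSymm.mp hT.isHermitian).eq
  have hsq : 0 ≤ ((Y - 1) * T * (Y - 1)ᵀ).trace := by
    have := (hT.mul_mul_conjTranspose_same (Y - 1)).trace_nonneg
    rwa [conjTranspose_eq_transpose_of_trivial] at this
  have hquad : (Y * T * Yᵀ).trace ≤ T.trace := by
    have := PosSemidef.trace_mul_nonneg hT hY
    rw [Matrix.mul_sub, trace_sub, Matrix.mul_one] at this
    rw [Matrix.mul_assoc, trace_mul_comm, Matrix.mul_assoc]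
    linarith
  have hswap : (T * Yᵀ).trace = (Y * T).trace := by
    rw [← trace_transpose, transpose_mul, transpose_transpose, hTs]
  have hexp : ((Y - 1) * T * (Y - 1)ᵀ).trace
      = (Y * T * Yᵀ).trace - 2 * (Y * T).trace + T.trace := by
    simp only [transpose_sub, transpose_one, Matrix.sub_mul, Matrix.mul_sub, Matrix.one_mul,
      Matrix.mul_one, trace_sub, hswap]
    ring
  linarith

lemma trace_mul_le_of_transpose_mul_self_le {S B T U : Matrix n n ℝ} (hS : S.IsSymm)
    (hT : T.PosDef) (hTT : T * T = S * B * S) (hU : Uᵀ * U ≤ B) : (S * U).trace ≤ T.trace := by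
  have hTu : IsUnit T.det := (isUnit_iff_isUnit_det T).mp hT.isUnit
  have hTi : (T⁻¹)ᵀ = T⁻¹ := by
    rw [transpose_nonsing_inv, (isHermitian_iff_isSymm.mp hT.isHermitian).eq]
  set Y := U * S * T⁻¹
  have hY : Yᵀ * Y ≤ 1 := calc
    Yᵀ * Y = star (S * T⁻¹) * (Uᵀ * U) * (S * T⁻¹) := by
      simp only [Y, star_eq_conjTranspose, conjTranspose_eq_transpose_of_trivial, transpose_mul,
        Matrix.mul_assoc]
    _ ≤ star (S * T⁻¹) * B * (S * T⁻¹) := star_left_conjugate_le_conjugate hU _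
    _ = T⁻¹ * (T * T) * T⁻¹ := by
      rw [hTT, star_eq_conjTranspose, conjTranspose_eq_transpose_of_trivial, transpose_mul, hS.eq,
        hTi]
      simp only [Matrix.mul_assoc]
    _ = 1 := by
      rw [← Matrix.mul_assoc, nonsing_inv_mul _ hTu, Matrix.one_mul, mul_nonsing_inv _ hTu]
  calc (S * U).trace = (Y * T).trace := by
        rw [trace_mul_comm, Matrix.mul_assoc, nonsing_inv_mul _ hTu, Matrix.mul_one]
    _ ≤ T.trace := trace_mul_le_trace_of_transpose_mul_self_le_one hT.posSemidef hY

lemma exists_transpose_mul_self_eq_and_trace_eq {S B T : Matrix n n ℝ} (hS : S.IsSymm)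
    (hSu : IsUnit S) (hB : B.IsSymm) (hBu : IsUnit B) (hT : T.PosDef) (hTT : T * T = S * B * S) :
    ∃ U : Matrix n n ℝ, Uᵀ * U = B ∧ (S * U).trace = T.trace := by
  have hSd := (isUnit_iff_isUnit_det S).mp hSu
  have hBd := (isUnit_iff_isUnit_det B).mp hBu
  have hTd := (isUnit_iff_isUnit_det T).mp hT.isUnit
  refine ⟨T⁻¹ * S * B, ?_, ?_⟩
  · calc (T⁻¹ * S * B)ᵀ * (T⁻¹ * S * B) = B * S * (T * T)⁻¹ * S * B := by
          rw [transpose_mul, transpose_mul, hS.eq, hB.eq, transpose_nonsing_inv,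
            (isHermitian_iff_isSymm.mp hT.isHermitian).eq, mul_inv_rev]
          simp only [Matrix.mul_assoc]
      _ = B := by
          rw [hTT, mul_inv_rev, mul_inv_rev]
          simp only [Matrix.mul_assoc, mul_nonsing_inv_cancel_left _ _ hSd,
            mul_nonsing_inv_cancel_left _ _ hBd, nonsing_inv_mul_cancel_left _ _ hSd]
  · calc (S * (T⁻¹ * S * B)).trace = (T⁻¹ * (T * T)).trace := by
          rw [hTT, trace_mul_comm]
          simp only [Matrix.mul_assoc]
      _ = T.trace := by rw [← Matrix.mul_assoc, nonsing_inv_mul _ hTd, Matrix.one_mul]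

end Matrix

lemma msqrt_eq_sqrt {n : ℕ} {M : Matrix (Fin n) (Fin n) ℝ} (h : M.PosSemidef) :
    msqrt M = CFC.sqrt M := by
  rw [msqrt, dif_pos h, CFC.sqrt_eq_real_sqrt M h.nonneg, cfcₙ_eq_cfc, h.1.cfc_eq,
    IsHermitian.cfc, Unitary.conjStarAlgAut_apply]
  rfl

lemma msqrt_posSemidef {n : ℕ} {M : Matrix (Fin n) (Fin n) ℝ} (h : M.PosSemidef) :
    (msqrt M).PosSemidef :=
  msqrt_eq_sqrt h ▸ (CFC.sqrt_nonneg M).posSemidef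

lemma msqrt_mul_self {n : ℕ} {M : Matrix (Fin n) (Fin n) ℝ} (h : M.PosSemidef) :
    msqrt M * msqrt M = M := by
  rw [msqrt_eq_sqrt h, CFC.sqrt_mul_sqrt_self M h.nonneg]

lemma msqrt_posDef {n : ℕ} {M : Matrix (Fin n) (Fin n) ℝ} (h : M.PosDef) : (msqrt M).PosDef :=
  (msqrt_posSemidef h.posSemidef).posDef_iff_isUnit.mpr
    (isUnit_of_mul_isUnit_left ((msqrt_mul_self h.posSemidef).symm ▸ h.isUnit))

theorem stmt_8 {n : ℕ} (A B : Matrix (Fin n) (Fin n) ℝ)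
    (hA : A.PosDef) (hB : B.PosDef) :
    IsLeast {t : ℝ | ∃ U : Matrix (Fin n) (Fin n) ℝ,
        (Matrix.fromBlocks B Uᵀ U 1).PosSemidef ∧
        t = A.trace + B.trace - 2 * (msqrt A * U).trace}
      (A.trace + B.trace - 2 * (msqrt (msqrt A * B * msqrt A)).trace) := by
  set S := msqrt A
  have hS : S.PosDef := msqrt_posDef hA
  have hSS : S.IsSymm := isHermitian_iff_isSymm.mp hS.isHermitian
  have hSBS : (S * B * S).PosDef := by
    simpa only [hS.isHermitian.eq] using
      hB.conjTranspose_mul_mul_same (mulVec_injective_of_isUnit hS.isUnit)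
  have hT := msqrt_posDef hSBS
  have hTT := msqrt_mul_self hSBS.posSemidef
  constructor
  · obtain ⟨U, hUU, htr⟩ := exists_transpose_mul_self_eq_and_trace_eq hSS hS.isUnit
      (isHermitian_iff_isSymm.mp hB.isHermitian) hB.isUnit hT hTT
    exact ⟨U, (fromBlocks_one_posSemidef_iff B U).mpr hUU.le, by rw [htr]⟩
  · rintro _ ⟨U, hU, rfl⟩
    have := trace_mul_le_of_transpose_mul_self_le hSS hT hTT
      ((fromBlocks_one_posSemidef_iff B U).mp hU)
    linarith
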